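/- Let W be a real vector space, and suppose there are a linear map F̃ : W → W, vectors u_v, u_c ∈ W and linear functionals ω_v, ω_c : W → ℝ satisfying F̃² = -id + u_v ⊗ ω_c + u_c ⊗ ω_v, F̃(u_v) = 0, F̃(u_c) = 0, ω_v ∘ F̃ = 0, ω_c ∘ F̃ = 0, ω_v(u_v) = 0, ω_c(u_c) = 0, ω_c(u_v) = 1, ω_v(u_c) = 1. Then the endomorphism J = F̃ + u_v ⊗ ω_v - u_c ⊗ ω_c satisfies J² = -id. -/
import Mathlib


/-- Pointwise content of the paper's Theorem 4.1: given the complete-lift relations of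
an almost contact structure, `J = F̃ + u_v ⊗ ω_v - u_c ⊗ ω_c` satisfies `J² = -id`. -/
theorem extended_almostComplex {W : Type*} [AddCommGroup W] [Module ℝ W]
    (F : W →ₗ[ℝ] W) (uv uc : W) (ωv ωc : W →ₗ[ℝ] ℝ)
    (h1 : ∀ x : W, F (F x) = -x + ωc x • uv + ωv x • uc)
    (h2 : F uv = 0) (h3 : F uc = 0)
    (h4 : ∀ x : W, ωv (F x) = 0) (h5 : ∀ x : W, ωc (F x) = 0)
    (h6 : ωv uv = 0) (h7 : ωc uc = 0) (h8 : ωc uv = 1) (h9 : ωv uc = 1)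
    (J : W → W) (hJ : ∀ x : W, J x = F x + ωv x • uv - ωc x • uc) :
    ∀ x : W, J (J x) = -x := by
  intro x
  rw [hJ, hJ]
  simp only [map_add, map_sub, map_smul, h1, h2, h3, h4, h5, h6, h7, h8, h9,
    smul_zero, smul_eq_mul, mul_one, mul_zero]
  module
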